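/- Characterization of implementable prices (uniform case): let A ∈ (0,1) and let p1, p2 ∈ (0,1] satisfy p1 ≤ A, p2 ≤ A and |p1 − p2| ≤ 1 − A. Then φ(p1,p2) ≠ ∅ if and only if M1(p2)/p1 + M2(p1)/p2 + p1·p2 ≤ 1. -/
import Mathlib


/-- Demand of seller 1 when ranked second (uniform match utilities). -/
noncomputable def D12 (A p1 p2 : ℝ) : ℝ := -A^2/2 + p1^2/2 - p1*p2 + A - p1 + p2

/-- Demand of seller 2 when ranked second (uniform match utilities). -/
noncomputable def D22 (A p1 p2 : ℝ) : ℝ := -A^2/2 + p2^2/2 - p1*p2 + A + p1 - p2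

/-- The bonus from being ranked first instead of second (uniform case). -/
noncomputable def bonus (A p1 p2 : ℝ) : ℝ := (1-A)^2 - (1/2)*(p1-p2)^2

/-- Seller 1's optimal deviation value when ranked second. -/
noncomputable def M1 (A p2 : ℝ) : ℝ :=
  sSup ((fun p' => p' * D12 A p' p2) '' Set.Icc (0:ℝ) 1)

/-- Seller 2's optimal deviation value when ranked second. -/
noncomputable def M2 (A p1 : ℝ) : ℝ :=
  sSup ((fun p' => p' * D22 A p1 p') '' Set.Icc (0:ℝ) 1)

/-- The function whose nonpositivity characterizes implementable prices. -/
noncomputable def H (A p1 p2 : ℝ) : ℝ := M1 A p2 / p1 + M2 A p1 / p2 + p1*p2 - 1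

/-- The set of implementable prices. -/
def implementableP (A : ℝ) : Set (ℝ × ℝ) :=
  {q | 0 < q.1 ∧ q.1 ≤ 1 ∧ 0 < q.2 ∧ q.2 ≤ 1 ∧ H A q.1 q.2 ≤ 0}

/-- The set of implementable search orders at prices `(p1, p2)`. -/
def phi (A p1 p2 : ℝ) : Set ℝ :=
  {α | α ∈ Set.Icc (0:ℝ) 1
    ∧ M1 A p2 ≤ p1 * D12 A p1 p2 + α * p1 * bonus A p1 p2
    ∧ M2 A p1 ≤ p2 * D22 A p1 p2 + (1-α) * p2 * bonus A p1 p2}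

/-- Characterization of implementable prices (uniform case):
`φ(p1,p2) ≠ ∅` iff `M1(p2)/p1 + M2(p1)/p2 + p1·p2 ≤ 1`. -/
theorem implementable_iff
    (A p1 p2 : ℝ) (hA : A ∈ Set.Ioo (0:ℝ) 1)
    (hp1 : p1 ∈ Set.Ioc (0:ℝ) 1) (hp2 : p2 ∈ Set.Ioc (0:ℝ) 1)
    (hp1A : p1 ≤ A) (hp2A : p2 ≤ A) (hgap : |p1 - p2| ≤ 1 - A) :
    (phi A p1 p2).Nonempty ↔ M1 A p2 / p1 + M2 A p1 / p2 + p1*p2 ≤ 1 := by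
  obtain ⟨hA0, hA1⟩ := hA
  obtain ⟨hp1pos, hp1le⟩ := hp1
  obtain ⟨hp2pos, hp2le⟩ := hp2
  have hh := abs_le.mp hgap
  have hB : 0 < bonus A p1 p2 := by
    unfold bonus; nlinarith [hh.1, hh.2]
  have hm1 : p1 * D12 A p1 p2 ≤ M1 A p2 :=
    le_csSup (isCompact_Icc.bddAbove_image (by unfold D12; fun_prop))
      (Set.mem_image_of_mem _ ⟨hp1pos.le, hp1le⟩)
  have hm2 : p2 * D22 A p1 p2 ≤ M2 A p1 :=
    le_csSup (isCompact_Icc.bddAbove_image (by unfold D22; fun_prop))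
      (Set.mem_image_of_mem _ ⟨hp2pos.le, hp2le⟩)
  have hsum : D12 A p1 p2 + D22 A p1 p2 + bonus A p1 p2 = 1 - p1*p2 := by
    unfold D12 D22 bonus; ring
  have hc1 : p1 * (M1 A p2 / p1) = M1 A p2 := mul_div_cancel₀ _ hp1pos.ne'
  have hc2 : p2 * (M2 A p1 / p2) = M2 A p1 := mul_div_cancel₀ _ hp2pos.ne'
  constructor
  · rintro ⟨α, ⟨hα0, hα1⟩, h1, h2⟩
    have e1 : M1 A p2 / p1 ≤ D12 A p1 p2 + α * bonus A p1 p2 := by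
      rw [div_le_iff₀ hp1pos]; nlinarith
    have e2 : M2 A p1 / p2 ≤ D22 A p1 p2 + (1-α) * bonus A p1 p2 := by
      rw [div_le_iff₀ hp2pos]; nlinarith
    linarith
  · intro h
    set a := M1 A p2 / p1 - D12 A p1 p2 with ha
    set b := M2 A p1 / p2 - D22 A p1 p2 with hb
    have ha0 : 0 ≤ a := by
      rw [ha, sub_nonneg, le_div_iff₀ hp1pos]; linarith
    have hb0 : 0 ≤ b := by
      rw [hb, sub_nonneg, le_div_iff₀ hp2pos]; linarith
    have hab : a + b ≤ bonus A p1 p2 := by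
      rw [ha, hb]; linarith
    refine ⟨a / bonus A p1 p2,
      ⟨⟨div_nonneg ha0 hB.le, (div_le_one hB).mpr (by linarith)⟩, ?_, ?_⟩⟩
    · have h1 : a / bonus A p1 p2 * p1 * bonus A p1 p2 = p1 * a := by
        field_simp
      have h2 : p1 * a = M1 A p2 - p1 * D12 A p1 p2 := by
        rw [ha, mul_sub, hc1]
      linarith
    · have h1 : (1 - a / bonus A p1 p2) * p2 * bonus A p1 p2
          = p2 * (bonus A p1 p2 - a) := by
        field_simp
      have h2 : p2 * b = M2 A p1 - p2 * D22 A p1 p2 := by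
        rw [hb, mul_sub, hc2]
      nlinarith
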